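/- Let n ≥ 1 and let m_0, …, m_n be positive reals with m_i ≥ √(m_{i-1} · m_{i+1}) for all i = 1, …, n−1. Then the negative numbers game with weights k_{ij} always terminates in at most n(n+1)/2 moves: for any starting position p ∈ ℝ^n, every sequence of positions p^(0) = p, p^(1), …, p^(N) in which each p^(t+1) is obtained from p^(t) by firing some index i with p^(t)_i < 0 satisfies N ≤ n(n+1)/2. -/

import Mathlib

/-!
Extend positions by zero to `ℕ` and let `Q` be their prefix sums, so that the sum of `p` over
the interval `[a, c)` is `Q c - Q a`; call `(a, c)` with `a < c ≤ n` a positive window of `p`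
when this sum is positive. These pairs are the positive roots `ε_a - ε_c` of type `A_n`, and a
move firing `i` acts on them by the transposition `σ = (i i+1)`. When the weights to the two
neighbours of `i` are exactly `1`, firing `i` permutes the prefix sums, `Q' = Q ∘ σ`; when they
are at most `1` (which is what the mass condition gives) and `p i < 0`, the error `Q' - Q ∘ σ`
is monotone, so `σ` still maps positive windows to positive windows. The move itself creates the
positive window `[i, i+1)`. Following each window forward in time, windows created at different
moves stay distinct, so a play has at most as many moves as there are windows, `n (n + 1) / 2`.
-/

open scoped RealInnerProductSpace

/-- The (unnormalized) vector `1_i / √(m i) - 1_{i-1} / √(m (i-1))`. -/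
noncomputable def uvec {n : ℕ} (m : Fin (n + 1) → ℝ) (i : Fin (n + 1)) :
    EuclideanSpace ℝ (Fin (n + 1)) :=
  EuclideanSpace.single i (Real.sqrt (m i))⁻¹ -
    EuclideanSpace.single (i - 1) (Real.sqrt (m (i - 1)))⁻¹

/-- The unit vector `α i` obtained by normalizing `1_i / √(m i) - 1_{i-1} / √(m (i-1))`. -/
noncomputable def alpha {n : ℕ} (m : Fin (n + 1) → ℝ) (i : Fin (n + 1)) :
    EuclideanSpace ℝ (Fin (n + 1)) :=
  ‖uvec m i‖⁻¹ • uvec m i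

/-- The weights `k i j = -2 (α i, α j)` of the numbers game. -/
noncomputable def kwt {n : ℕ} (m : Fin (n + 1) → ℝ) (i j : Fin (n + 1)) : ℝ :=
  -2 * ⟪alpha m i, alpha m j⟫

open Finset Equiv

namespace NumbersGame

def prefixSum (p : ℕ → ℝ) (x : ℕ) : ℝ := ∑ j ∈ range x, p j

lemma prefixSum_succ (p : ℕ → ℝ) (x : ℕ) : prefixSum p (x + 1) = prefixSum p x + p x :=
  sum_range_succ p x

def fire (k : ℕ → ℕ → ℝ) (p : ℕ → ℝ) (i : ℕ) : ℕ → ℝ := fun j => p j + p i * k i j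

structure IsPathRow (k : ℕ → ℝ) (i : ℕ) : Prop where
  apply_self : k i = -2
  apply_adj_le_one : ∀ j, j + 1 = i ∨ j = i + 1 → k j ≤ 1
  apply_far : ∀ j, j + 1 < i ∨ i + 1 < j → k j = 0

variable {k : ℕ → ℕ → ℝ} {p : ℕ → ℝ} {i n : ℕ}

theorem monotone_prefixSum_fire_sub_swap (hk : IsPathRow (k i) i) (hpi : p i < 0) :
    Monotone fun x => prefixSum (fire k p i) x - prefixSum p (swap i (i + 1) x) := by
  refine monotone_nat_of_le_succ fun x => ?_
  obtain hx | rfl | rfl | rfl | hx : x + 1 < i ∨ x + 1 = i ∨ x = i ∨ x = i + 1 ∨ i + 1 < x := by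
    omega
  · rw [swap_apply_of_ne_of_ne (by omega) (by omega), swap_apply_of_ne_of_ne (by omega) (by omega)]
    simp only [prefixSum_succ, fire, hk.apply_far x (.inl hx)]
    linarith
  · rw [swap_apply_left, swap_apply_of_ne_of_ne (by omega) (by omega)]
    simp only [prefixSum_succ, fire]
    nlinarith [hk.apply_adj_le_one x (.inl rfl)]
  · rw [swap_apply_left, swap_apply_right]
    simp only [prefixSum_succ, fire, hk.apply_self]
    linarith
  · rw [swap_apply_right, swap_apply_of_ne_of_ne (by omega) (by omega)]
    simp only [prefixSum_succ, fire]
    nlinarith [hk.apply_adj_le_one (i + 1) (.inr rfl)]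
  · rw [swap_apply_of_ne_of_ne (by omega) (by omega), swap_apply_of_ne_of_ne (by omega) (by omega)]
    simp only [prefixSum_succ, fire, hk.apply_far x (.inr hx)]
    linarith

def IsPositiveWindow (n : ℕ) (p : ℕ → ℝ) (w : ℕ × ℕ) : Prop :=
  w.1 < w.2 ∧ w.2 ≤ n ∧ prefixSum p w.1 < prefixSum p w.2

theorem IsPositiveWindow.swap_fire {w : ℕ × ℕ} (hw : IsPositiveWindow n p w) (hi : i < n)
    (hk : IsPathRow (k i) i) (hpi : p i < 0) :
    IsPositiveWindow n (fire k p i) (Prod.map (swap i (i + 1)) (swap i (i + 1)) w) := by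
  obtain ⟨a, c⟩ := w
  obtain ⟨hac, hcn, hpos⟩ := hw
  have hne : ¬(a = i ∧ c = i + 1) := by
    rintro ⟨rfl, rfl⟩
    rw [prefixSum_succ] at hpos
    linarith
  have hmono := monotone_prefixSum_fire_sub_swap hk hpi
    (show swap i (i + 1) a ≤ swap i (i + 1) c by simp only [swap_apply_def]; split_ifs <;> omega)
  simp only [swap_apply_self] at hmono
  refine ⟨?_, ?_, ?_⟩
  · simp only [Prod.map, swap_apply_def]; split_ifs <;> omega
  · simp only [Prod.map, swap_apply_def]; split_ifs <;> omega
  · simp only [Prod.map]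
    linarith

theorem isPositiveWindow_fire_self (hi : i < n) (hki : k i i = -2) (hpi : p i < 0) :
    IsPositiveWindow n (fire k p i) (i, i + 1) :=
  ⟨i.lt_succ_self, hi, by simp only [prefixSum_succ, fire, hki]; linarith⟩

def IsNegativePlay (n N : ℕ) (k : ℕ → ℕ → ℝ) (p : ℕ → ℕ → ℝ) (f : ℕ → ℕ) : Prop :=
  ∀ t < N, f t < n ∧ p t (f t) < 0 ∧ IsPathRow (k (f t)) (f t) ∧ p (t + 1) = fire k (p t) (f t)

def swapProd (f : ℕ → ℕ) : ℕ → Perm ℕ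
  | 0 => 1
  | t + 1 => swap (f t) (f t + 1) * swapProd f t

/-- The window created by the move at time `s`, in the labels of time `0`: at time `t > s` it is
`Prod.map (swapProd f t) (swapProd f t) (label f s)`. -/
def label (f : ℕ → ℕ) (s : ℕ) : ℕ × ℕ :=
  ((swapProd f (s + 1))⁻¹ (f s), (swapProd f (s + 1))⁻¹ (f s + 1))

lemma swapProd_succ_label (f : ℕ → ℕ) (s : ℕ) :
    Prod.map (swapProd f (s + 1)) (swapProd f (s + 1)) (label f s) = (f s, f s + 1) := by
  simp [label]

lemma swapProd_label (f : ℕ → ℕ) (s : ℕ) :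
    Prod.map (swapProd f s) (swapProd f s) (label f s) = (f s + 1, f s) := by
  simp [label, swapProd, Perm.mul_apply, swap_inv]

variable {N : ℕ} {p : ℕ → ℕ → ℝ} {f : ℕ → ℕ}

theorem IsNegativePlay.isPositiveWindow (h : IsNegativePlay n N k p f) {t : ℕ} (ht : t ≤ N)
    {s : ℕ} (hs : s < t) :
    IsPositiveWindow n (p t) (Prod.map (swapProd f t) (swapProd f t) (label f s)) := by
  induction t with
  | zero => omega
  | succ t ih =>
    obtain ⟨hf, hneg, hk, hnext⟩ := h t (by omega)
    rw [hnext]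
    obtain hs | rfl := Nat.lt_succ_iff_lt_or_eq.mp hs
    · exact (ih (by omega) hs).swap_fire hf hk hneg
    · rw [swapProd_succ_label]
      exact isPositiveWindow_fire_self hf hk.apply_self hneg

theorem IsNegativePlay.injOn_label (h : IsNegativePlay n N k p f) :
    Set.InjOn (label f) (range N) := by
  suffices ∀ s s', s < s' → s' < N → label f s ≠ label f s' by
    intro s hs s' hs' heq
    simp only [coe_range, Set.mem_Iio] at hs hs'
    by_contra hne
    obtain hlt | hlt := Nat.lt_or_gt_of_ne hne
    · exact this s s' hlt hs' heq
    · exact this s' s hlt hs heq.symm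
  intro s s' hss' hs' heq
  have hw := h.isPositiveWindow hs'.le hss'
  rw [heq, swapProd_label] at hw
  exact absurd hw.1 (by omega)

theorem IsNegativePlay.length_le (h : IsNegativePlay n N k p f) : N ≤ n * (n + 1) / 2 := by
  have hcount : #{w ∈ range (n + 1) ×ˢ range (n + 1) | w.1 < w.2} = n * (n + 1) / 2 := by
    rw [card_product_filter_lt, card_range, Nat.choose_two_right, Nat.add_sub_cancel, mul_comm]
  rw [← hcount, ← card_range N]
  refine card_le_card_of_injOn (fun s => Prod.map (swapProd f N) (swapProd f N) (label f s))
    (fun s hs => ?_) ?_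
  · obtain ⟨hlt, hle, -⟩ := h.isPositiveWindow le_rfl (mem_range.mp hs)
    simp only [coe_filter, mem_product, mem_range, Set.mem_ofPred_eq]
    omega
  · exact (Prod.map_injective.mpr ⟨(swapProd f N).injective, (swapProd f N).injective⟩).comp_injOn
      h.injOn_label

end NumbersGame

section Weights

open EuclideanSpace

variable {n : ℕ} (m : Fin (n + 1) → ℝ)

lemma Fin.succ_sub_one_eq_castSucc (i : Fin n) : (i.succ : Fin (n + 1)) - 1 = i.castSucc := by
  rw [← Fin.coeSucc_eq_succ, add_sub_cancel_right]

lemma uvec_succ (i : Fin n) :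
    uvec m i.succ = single i.succ (√(m i.succ))⁻¹ - single i.castSucc (√(m i.castSucc))⁻¹ := by
  rw [uvec, Fin.succ_sub_one_eq_castSucc]

lemma inv_sqrt_mul_inv_sqrt {x : ℝ} (hx : 0 ≤ x) : (√x)⁻¹ * (√x)⁻¹ = x⁻¹ := by
  rw [← mul_inv, Real.mul_self_sqrt hx]

lemma inner_uvec_succ (i j : Fin n) :
    ⟪uvec m i.succ, uvec m j.succ⟫ =
      (if i = j then (√(m i.succ))⁻¹ * (√(m j.succ))⁻¹ + (√(m i.castSucc))⁻¹ * (√(m j.castSucc))⁻¹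
        else 0) -
      (if (i : ℕ) = j + 1 then (√(m i.castSucc))⁻¹ * (√(m j.succ))⁻¹ else 0) -
      (if (i : ℕ) + 1 = j then (√(m i.succ))⁻¹ * (√(m j.castSucc))⁻¹ else 0) := by
  simp only [uvec_succ, inner_sub_right, inner_sub_left, inner_single_left, map_inv₀,
    Real.ringHom_apply, PiLp.single_apply, Fin.ext_iff, Fin.val_succ, Nat.add_right_cancel_iff,
    mul_ite, mul_zero, Fin.val_castSucc]
  split_ifs <;> ring

lemma norm_uvec_succ_sq (hm : ∀ i, 0 ≤ m i) (i : Fin n) :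
    ‖uvec m i.succ‖ ^ 2 = (m i.succ)⁻¹ + (m i.castSucc)⁻¹ := by
  rw [← real_inner_self_eq_norm_sq, inner_uvec_succ, if_pos rfl, if_neg (by omega),
    if_neg (by omega), inv_sqrt_mul_inv_sqrt (hm _), inv_sqrt_mul_inv_sqrt (hm _), sub_zero, sub_zero]

lemma inner_uvec_succ_of_castSucc_eq (hm : ∀ i, 0 ≤ m i) {i j : Fin n} (h : j.castSucc = i.succ) :
    ⟪uvec m i.succ, uvec m j.succ⟫ = -(m i.succ)⁻¹ := by
  have hj : (j : ℕ) = i + 1 := by simpa [Fin.ext_iff] using h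
  rw [inner_uvec_succ, if_neg (by omega), if_neg (by omega), if_pos hj.symm, h,
    inv_sqrt_mul_inv_sqrt (hm _)]
  ring

lemma inner_uvec_succ_of_far {i j : Fin n} (h : (i : ℕ) + 1 < j ∨ (j : ℕ) + 1 < i) :
    ⟪uvec m i.succ, uvec m j.succ⟫ = 0 := by
  rw [inner_uvec_succ, if_neg (by omega), if_neg (by omega), if_neg (by omega)]
  ring

lemma sq_two_mul_le_add_mul_add {x y z : ℝ} (hx : 0 ≤ x) (hy : 0 ≤ y) (hz : 0 ≤ z)
    (h : y ^ 2 ≤ x * z) : (2 * y) ^ 2 ≤ (y + x) * (z + y) := by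
  have : 2 * y ≤ x + z := by nlinarith [sq_nonneg (x - z)]
  nlinarith

lemma kwt_eq (a b : Fin (n + 1)) :
    kwt m a b = -2 * ⟪uvec m a, uvec m b⟫ / (‖uvec m a‖ * ‖uvec m b‖) := by
  rw [kwt, alpha, alpha, real_inner_smul_left, real_inner_smul_right]
  field_simp

lemma kwt_comm (a b : Fin (n + 1)) : kwt m a b = kwt m b a := by
  rw [kwt, kwt, real_inner_comm]

lemma kwt_self {a : Fin (n + 1)} (ha : uvec m a ≠ 0) : kwt m a a = -2 := by
  rw [kwt, real_inner_self_eq_norm_sq, alpha, norm_smul, norm_inv, norm_norm,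
    inv_mul_cancel₀ (norm_ne_zero_iff.mpr ha)]
  ring

lemma uvec_succ_ne_zero (hm : ∀ i, 0 < m i) (i : Fin n) : uvec m i.succ ≠ 0 := by
  have h := norm_uvec_succ_sq m (fun i => (hm i).le) i
  have : 0 < (m i.succ)⁻¹ + (m i.castSucc)⁻¹ := by
    have := hm i.succ; have := hm i.castSucc; positivity
  intro h0
  rw [h0, norm_zero] at h
  linarith

lemma kwt_succ_of_far {i j : Fin n} (h : (i : ℕ) + 1 < j ∨ (j : ℕ) + 1 < i) :
    kwt m i.succ j.succ = 0 := by
  rw [kwt_eq, inner_uvec_succ_of_far m h]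
  simp

lemma kwt_succ_le_one (hm : ∀ i, 0 < m i) {i j : Fin n} (h : j.castSucc = i.succ)
    (hmass : m i.castSucc * m j.succ ≤ m i.succ ^ 2) : kwt m i.succ j.succ ≤ 1 := by
  have hm' i := (hm i).le
  have hnorm : 0 < ‖uvec m i.succ‖ * ‖uvec m j.succ‖ := by
    have := uvec_succ_ne_zero m hm i; have := uvec_succ_ne_zero m hm j; positivity
  have hsq : (2 * (m i.succ)⁻¹) ^ 2 ≤ (‖uvec m i.succ‖ * ‖uvec m j.succ‖) ^ 2 := by
    rw [mul_pow ‖_‖, norm_uvec_succ_sq m hm', norm_uvec_succ_sq m hm', h]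
    refine sq_two_mul_le_add_mul_add (inv_nonneg.mpr (hm' _)) (inv_nonneg.mpr (hm' _))
      (inv_nonneg.mpr (hm' _)) ?_
    rw [← mul_inv, inv_pow]
    exact inv_anti₀ (by have := hm i.castSucc; have := hm j.succ; positivity) hmass
  rw [kwt_eq, inner_uvec_succ_of_castSucc_eq m hm' h, div_le_one hnorm]
  have := (pow_le_pow_iff_left₀ (by have := hm i.succ; positivity) hnorm.le two_ne_zero).mp hsq
  linarith

end Weights

lemma mul_le_sq_of_sqrt_mul_le {n : ℕ} {m : Fin (n + 1) → ℝ}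
    (hmass : ∀ i : Fin (n + 1), 1 ≤ (i : ℕ) → (i : ℕ) ≤ n - 1 →
      Real.sqrt (m (i - 1) * m (i + 1)) ≤ m i)
    {i j : Fin n} (h : j.castSucc = i.succ) : m i.castSucc * m j.succ ≤ m i.succ ^ 2 := by
  have hj : (j : ℕ) = i + 1 := by simpa [Fin.ext_iff] using h
  have hle := (Real.sqrt_le_iff.mp (hmass i.succ (by simp) (by simp; omega))).2
  have hsucc : i.succ + 1 = j.succ := by rw [← h, Fin.coeSucc_eq_succ]
  rwa [Fin.succ_sub_one_eq_castSucc, hsucc] at hle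

namespace NumbersGame

noncomputable def shiftedKwt {n : ℕ} (m : Fin (n + 1) → ℝ) (i j : ℕ) : ℝ :=
  if h : i < n ∧ j < n then kwt m (Fin.succ ⟨i, h.1⟩) (Fin.succ ⟨j, h.2⟩) else 0

def extendByZero {n : ℕ} (v : Fin n → ℝ) (j : ℕ) : ℝ :=
  if h : j < n then v ⟨j, h⟩ else 0

variable {n : ℕ} {m : Fin (n + 1) → ℝ}

lemma isPathRow_shiftedKwt (hm : ∀ i, 0 < m i)
    (hmass : ∀ i : Fin (n + 1), 1 ≤ (i : ℕ) → (i : ℕ) ≤ n - 1 →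
      Real.sqrt (m (i - 1) * m (i + 1)) ≤ m i) (i : Fin n) :
    IsPathRow (shiftedKwt m i) i where
  apply_self := by simp [shiftedKwt, kwt_self m (uvec_succ_ne_zero m hm i)]
  apply_adj_le_one j hj := by
    unfold shiftedKwt
    split_ifs with h
    · obtain hj | hj := hj
      · rw [kwt_comm]
        exact kwt_succ_le_one m hm (Fin.ext (by simp; omega))
          (mul_le_sq_of_sqrt_mul_le hmass (Fin.ext (by simp; omega)))
      · exact kwt_succ_le_one m hm (Fin.ext (by simp; omega))
          (mul_le_sq_of_sqrt_mul_le hmass (Fin.ext (by simp; omega)))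
    · exact zero_le_one
  apply_far j hj := by
    unfold shiftedKwt
    split_ifs with h
    · exact kwt_succ_of_far m (by simp only; omega)
    · rfl

lemma fire_shiftedKwt_extendByZero (v : Fin n → ℝ) (i : Fin n) :
    fire (shiftedKwt m) (extendByZero v) i =
      extendByZero fun j => v j + v i * kwt m i.succ j.succ := by
  funext j
  by_cases hj : j < n <;> simp [fire, shiftedKwt, extendByZero, hj]

end NumbersGame

open NumbersGame

/-- Component `j` of `p t` is the paper's `p_{j+1}`, whence the `succ`s. -/
theorem numbers_game_terminates_general
    (n : ℕ) (m : Fin (n + 1) → ℝ)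
    (hm : ∀ i, 0 < m i)
    (hmass : ∀ i : Fin (n + 1), 1 ≤ (i : ℕ) → (i : ℕ) ≤ n - 1 →
      Real.sqrt (m (i - 1) * m (i + 1)) ≤ m i)
    (N : ℕ) (p : ℕ → Fin n → ℝ)
    (hstep : ∀ t < N, ∃ i : Fin n, p t i < 0 ∧
      p (t + 1) = fun j => p t j + p t i * kwt m i.succ j.succ) :
    N ≤ n * (n + 1) / 2 := by
  choose fired hneg hnext using hstep
  refine IsNegativePlay.length_le (k := shiftedKwt m) (p := fun t => extendByZero (p t))
    (f := fun t => if h : t < N then fired t h else 0) fun t ht => ?_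
  simp only [dif_pos ht]
  refine ⟨Fin.is_lt _, by simpa [extendByZero] using hneg t ht, isPathRow_shiftedKwt hm hmass _, ?_⟩
  rw [hnext t ht, fire_shiftedKwt_extendByZero]

/-- If every interior mass is at least the geometric mean of the masses of its
immediate neighbors, then every negative play of the numbers game with weights
`k i j = -2 (α i, α j)` terminates in at most `n (n + 1) / 2` moves.
A position is `p : Fin n → ℝ` (components `p 1, …, p n` of the paper);
firing index `i` (with `p i < 0`) adds `p i * k i j` to each component `p j`. -/
theorem numbers_game_terminates
    (n : ℕ) (hn : 1 ≤ n) (m : Fin (n + 1) → ℝ)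
    (hm : ∀ i, 0 < m i)
    (hmass : ∀ i : Fin (n + 1), 1 ≤ (i : ℕ) → (i : ℕ) ≤ n - 1 →
      Real.sqrt (m (i - 1) * m (i + 1)) ≤ m i)
    (N : ℕ) (p : ℕ → Fin n → ℝ)
    (hstep : ∀ t < N, ∃ i : Fin n, p t i < 0 ∧
      p (t + 1) = fun j => p t j + p t i * kwt m i.succ j.succ) :
    N ≤ n * (n + 1) / 2 :=
  numbers_game_terminates_general n m hm hmass N p hstep
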